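/- For every integer p ≥ 1 and every real q ≥ p, the integral over the ordered simplex {(s₁,…,s_p) : 1 ≥ s₁ ≥ s₂ ≥ ⋯ ≥ s_p ≥ 0} of the function ∏_{i=1}^{p} s_i^{q−p} · ∏_{1 ≤ i < j ≤ p} (s_i² − s_j²) is nonnegative and at most (q − p + 1)^{−p}; in particular, for fixed p it is O(q^{−p}) as q → ∞. -/

import Mathlib

open MeasureTheory Filter Asymptotics

/-- The ordered simplex `{1 ≥ s₁ ≥ s₂ ≥ ⋯ ≥ s_p ≥ 0}` in `ℝ^p`. -/
def orderedSimplex (p : ℕ) : Set (Fin p → ℝ) :=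
  {s | (∀ i : Fin p, 0 ≤ s i ∧ s i ≤ 1) ∧ ∀ i j : Fin p, i ≤ j → s j ≤ s i}

/-- The rescaled radial Jacobian integral
`∫_{1 ≥ s₁ ≥ ⋯ ≥ s_p ≥ 0} ∏_i s_i^{q−p} ∏_{i<j} (s_i² − s_j²) ds`. -/
noncomputable def simplexIntegral (p : ℕ) (q : ℝ) : ℝ :=
  ∫ s in orderedSimplex p,
    (∏ i : Fin p, s i ^ (q - (p : ℝ))) *
      ∏ i : Fin p, ∏ j ∈ Finset.Ioi i, ((s i) ^ 2 - (s j) ^ 2)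

/-!
On the ordered simplex every factor `s_i² - s_j²` (`i < j`) lies in `[0, 1]`, so the integrand
lies between `0` and `∏ i, s_i ^ (q - p)`. Enlarging the domain to the unit cube, Fubini computes
the integral of the latter as `(q - p + 1)⁻¹ ^ p`.
-/

open Set

section Cube

variable {ι : Type*} [Fintype ι]

lemma volume_restrict_Icc_zero_one :
    (volume : Measure (ι → ℝ)).restrict (Icc 0 1) =
      Measure.pi fun _ => volume.restrict (Icc (0 : ℝ) 1) := by
  rw [← pi_univ_Icc, volume_pi, Measure.restrict_pi_pi]
  rfl

lemma integrableOn_Icc_prod_rpow {c : ℝ} (hc : -1 < c) :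
    IntegrableOn (fun s : ι → ℝ => ∏ i, s i ^ c) (Icc 0 1) := by
  rw [IntegrableOn, volume_restrict_Icc_zero_one]
  exact Integrable.fintype_prod fun _ =>
    (intervalIntegrable_iff_integrableOn_Icc_of_le zero_le_one).1
      (intervalIntegral.intervalIntegrable_rpow' hc)

lemma integral_Icc_prod_rpow {c : ℝ} (hc : -1 < c) :
    ∫ s in Icc (0 : ι → ℝ) 1, ∏ i, s i ^ c = (c + 1)⁻¹ ^ Fintype.card ι := by
  rw [volume_restrict_Icc_zero_one, integral_fintype_prod_eq_pow (fun x : ℝ => x ^ c),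
    integral_Icc_eq_integral_Ioc, ← intervalIntegral.integral_of_le zero_le_one,
    integral_rpow (Or.inl hc), Real.one_rpow, Real.zero_rpow (by linarith), sub_zero, one_div]

end Cube

lemma measurableSet_orderedSimplex (p : ℕ) : MeasurableSet (orderedSimplex p) := by
  simp only [orderedSimplex, ofPred_and, ofPred_forall]
  measurability

lemma orderedSimplex_subset_Icc (p : ℕ) : orderedSimplex p ⊆ Icc 0 1 :=
  fun _ hs => ⟨fun i => (hs.1 i).1, fun i => (hs.1 i).2⟩

lemma sq_sub_sq_mem_Icc_of_mem_orderedSimplex {p : ℕ} {s : Fin p → ℝ} (hs : s ∈ orderedSimplex p)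
    {i j : Fin p} (hij : i ≤ j) : s i ^ 2 - s j ^ 2 ∈ Icc 0 1 := by
  have hj := pow_le_pow_left₀ (hs.1 j).1 (hs.2 i j hij) 2
  have hi := pow_le_one₀ (n := 2) (hs.1 i).1 (hs.1 i).2
  constructor <;> nlinarith [sq_nonneg (s j)]

lemma prod_sq_sub_sq_mem_Icc_of_mem_orderedSimplex {p : ℕ} {s : Fin p → ℝ}
    (hs : s ∈ orderedSimplex p) :
    ∏ i : Fin p, ∏ j ∈ Finset.Ioi i, (s i ^ 2 - s j ^ 2) ∈ Icc 0 1 := by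
  have h := fun i j (hj : j ∈ Finset.Ioi i) =>
    sq_sub_sq_mem_Icc_of_mem_orderedSimplex hs (Finset.mem_Ioi.1 hj).le
  exact ⟨Finset.prod_nonneg fun i _ => Finset.prod_nonneg fun j hj => (h i j hj).1,
    Finset.prod_le_one (fun i _ => Finset.prod_nonneg fun j hj => (h i j hj).1)
      fun i _ => Finset.prod_le_one (fun j hj => (h i j hj).1) fun j hj => (h i j hj).2⟩

lemma simplexIntegrand_mem_Icc {p : ℕ} (c : ℝ) {s : Fin p → ℝ} (hs : s ∈ orderedSimplex p) :
    (∏ i, s i ^ c) * ∏ i : Fin p, ∏ j ∈ Finset.Ioi i, (s i ^ 2 - s j ^ 2) ∈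
      Icc 0 (∏ i, s i ^ c) := by
  have hprod : 0 ≤ ∏ i, s i ^ c := Finset.prod_nonneg fun i _ => Real.rpow_nonneg (hs.1 i).1 c
  obtain ⟨h0, h1⟩ := prod_sq_sub_sq_mem_Icc_of_mem_orderedSimplex hs
  exact ⟨mul_nonneg hprod h0, mul_le_of_le_one_right hprod h1⟩

lemma simplexIntegral_nonneg (p : ℕ) (q : ℝ) : 0 ≤ simplexIntegral p q :=
  setIntegral_nonneg (measurableSet_orderedSimplex p) fun _ hs => (simplexIntegrand_mem_Icc _ hs).1

lemma simplexIntegral_le {p : ℕ} {q : ℝ} (hq : (p : ℝ) - 1 < q) :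
    simplexIntegral p q ≤ (q - p + 1)⁻¹ ^ p := by
  have hc : -1 < q - p := by linarith
  have hS := measurableSet_orderedSimplex p
  have hint := integrableOn_Icc_prod_rpow (ι := Fin p) hc
  calc simplexIntegral p q ≤ ∫ s in orderedSimplex p, ∏ i, s i ^ (q - p : ℝ) :=
        integral_mono_of_nonneg
          (ae_restrict_of_forall_mem hS fun _ hs => (simplexIntegrand_mem_Icc _ hs).1)
          (hint.mono_set (orderedSimplex_subset_Icc p))
          (ae_restrict_of_forall_mem hS fun _ hs => (simplexIntegrand_mem_Icc _ hs).2)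
    _ ≤ ∫ s in Icc (0 : Fin p → ℝ) 1, ∏ i, s i ^ (q - p : ℝ) :=
        setIntegral_mono_set hint
          (ae_restrict_of_forall_mem measurableSet_Icc fun s hs =>
            Finset.prod_nonneg fun i _ => Real.rpow_nonneg (hs.1 i) _)
          (orderedSimplex_subset_Icc p).eventuallyLE
    _ = (q - p + 1)⁻¹ ^ p := by
        rw [integral_Icc_prod_rpow hc, Fintype.card_fin]

lemma isBigO_add_rpow_neg (a : ℝ) {r : ℝ} (hr : 0 ≤ r) :
    (fun x : ℝ => (x + a) ^ (-r)) =O[atTop] fun x => x ^ (-r) := by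
  have hequiv : (fun x : ℝ => x + a) ~[atTop] id :=
    IsEquivalent.refl.add_const_of_norm_tendsto_atTop
      (tendsto_norm_atTop_atTop.comp tendsto_id)
  have hinv := (hequiv.inv.isBigO.rpow hr
    (eventually_ge_atTop 0 |>.mono fun x hx => inv_nonneg.2 hx))
  refine hinv.congr' ?_ ?_
  · filter_upwards [eventually_ge_atTop (-a)] with x hx
    simp [Real.inv_rpow (by linarith : 0 ≤ x + a), Real.rpow_neg (by linarith : 0 ≤ x + a)]
  · filter_upwards [eventually_ge_atTop 0] with x hx
    simp [Real.inv_rpow hx, Real.rpow_neg hx]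

theorem simplex_integral_bounds (p : ℕ) :
    (∀ q : ℝ, (p : ℝ) ≤ q →
      0 ≤ simplexIntegral p q ∧
        simplexIntegral p q ≤ (q - (p : ℝ) + 1) ^ (-(p : ℝ)))
    ∧ (fun q : ℝ => simplexIntegral p q) =O[atTop] fun q : ℝ => q ^ (-(p : ℝ)) := by
  have bounds : ∀ q : ℝ, (p : ℝ) ≤ q →
      0 ≤ simplexIntegral p q ∧ simplexIntegral p q ≤ (q - p + 1) ^ (-(p : ℝ)) := fun q hq =>
    ⟨simplexIntegral_nonneg p q, by
      rw [Real.rpow_neg (by linarith), Real.rpow_natCast, ← inv_pow]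
      exact simplexIntegral_le (by linarith)⟩
  have decay : (fun q : ℝ => (q - p + 1) ^ (-(p : ℝ))) =O[atTop] fun q => q ^ (-(p : ℝ)) := by
    simpa only [sub_add_eq_add_sub, add_sub_assoc] using isBigO_add_rpow_neg (1 - p) p.cast_nonneg
  refine ⟨bounds, IsBigO.trans ?_ decay⟩
  refine IsBigO.of_bound' ((eventually_ge_atTop (p : ℝ)).mono fun q hq => ?_)
  obtain ⟨h0, h1⟩ := bounds q hq
  rw [Real.norm_of_nonneg h0, Real.norm_of_nonneg (h0.trans h1)]
  exact h1
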